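/- Let B be a Banach A-bimodule with A·A** ⊆ A (A is a right ideal in A**) and B**·A = B** (the right module action of A on B** is surjective). If every continuous derivation from A** into B*** is inner, then every continuous derivation from A into B* is inner. -/

import Mathlib

namespace NormedSpace

/-- The topological dual of a seminormed space `E` (old `NormedSpace.Dual`, removed from Mathlib). -/
abbrev Dual (𝕜 : Type*) [NontriviallyNormedField 𝕜] (E : Type*) [SeminormedAddCommGroup E]
    [NormedSpace 𝕜 E] : Type _ :=
  E →L[𝕜] 𝕜

end NormedSpace

open ContinuousLinearMap NormedSpace

noncomputable section

section Defs

variable {X Y Z W : Type} [NormedAddCommGroup X] [NormedSpace ℝ X]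
  [NormedAddCommGroup Y] [NormedSpace ℝ Y] [NormedAddCommGroup Z] [NormedSpace ℝ Z]
  [NormedAddCommGroup W] [NormedSpace ℝ W]

/-- The first adjoint `m^*` of a bounded bilinear map `m : X × Y → Z`,
as a map `Z^* × X → Y^*`, `⟨m^*(z',x), y⟩ = ⟨z', m(x,y)⟩`. -/
def adj1 (m : X →L[ℝ] Y →L[ℝ] Z) :
    Dual ℝ Z →L[ℝ] X →L[ℝ] Dual ℝ Y :=
  (((ContinuousLinearMap.compL ℝ X (Y →L[ℝ] Z) (Dual ℝ Y)).flip m).comp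
    (ContinuousLinearMap.compL ℝ Y Z ℝ))

@[simp] lemma adj1_apply (m : X →L[ℝ] Y →L[ℝ] Z) (z' : Dual ℝ Z) (x : X) (y : Y) :
    adj1 m z' x y = z' (m x y) := rfl

/-- The first (left) Arens extension `m^{***} : X^{**} × Y^{**} → Z^{**}` of a
bounded bilinear map `m : X × Y → Z`. -/
def arens (m : X →L[ℝ] Y →L[ℝ] Z) :
    Dual ℝ (Dual ℝ X) →L[ℝ] Dual ℝ (Dual ℝ Y) →L[ℝ] Dual ℝ (Dual ℝ Z) :=
  adj1 (adj1 (adj1 m))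

/-- The adjoint (dual map) of a bounded linear map. -/
def dualMap' (D : X →L[ℝ] Y) : Dual ℝ Y →L[ℝ] Dual ℝ X :=
  (ContinuousLinearMap.compL ℝ X Y ℝ).flip D

@[simp] lemma dualMap'_apply (D : X →L[ℝ] Y) (g : Dual ℝ Y) (x : X) :
    dualMap' D g x = g (D x) := rfl

/-- The second adjoint `D'' : X^{**} → Y^{**}` of a bounded linear map. -/
def bidualMap (D : X →L[ℝ] Y) : Dual ℝ (Dual ℝ X) →L[ℝ] Dual ℝ (Dual ℝ Y) :=
  dualMap' (dualMap' D)

/-- Given an action `t : A × X → X`, the transposed action on the dual `X^*`: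
`(dualAct t) a f = f ∘ (t a)`. -/
def dualAct (t : W →L[ℝ] X →L[ℝ] X) : W →L[ℝ] Dual ℝ X →L[ℝ] Dual ℝ X :=
  ((ContinuousLinearMap.compL ℝ X X ℝ).flip).comp t

@[simp] lemma dualAct_apply (t : W →L[ℝ] X →L[ℝ] X) (a : W) (f : Dual ℝ X) (x : X) :
    dualAct t a f x = f (t a x) := rfl

/-- `D : A → X` is a derivation with respect to the multiplication `mul'` on `A`
and the left action `l` and right action `r` (`r a x` means `x · a`) of `A` on `X`. -/
def IsDer {A' : Type} [NormedAddCommGroup A'] [NormedSpace ℝ A']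
    (mul' : A' →L[ℝ] A' →L[ℝ] A') (l r : A' →L[ℝ] X →L[ℝ] X) (D : A' →L[ℝ] X) : Prop :=
  ∀ a b : A', D (mul' a b) = l a (D b) + r b (D a)

/-- `D : A → X` is an inner derivation: `D a = a·x - x·a` for some `x`. -/
def IsInner {A' : Type} [NormedAddCommGroup A'] [NormedSpace ℝ A']
    (l r : A' →L[ℝ] X →L[ℝ] X) (D : A' →L[ℝ] X) : Prop :=
  ∃ x : X, ∀ a : A', D a = l a x - r a x

/-- The bimodule axioms for actions `l`, `r` of an algebra with multiplication `mul'`. -/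
def IsBimod {A' : Type} [NormedAddCommGroup A'] [NormedSpace ℝ A']
    (mul' : A' →L[ℝ] A' →L[ℝ] A') (l r : A' →L[ℝ] X →L[ℝ] X) : Prop :=
  (∀ a b x, l (mul' a b) x = l a (l b x)) ∧
  (∀ a b x, r (mul' a b) x = r b (r a x)) ∧
  (∀ a b x, l a (r b x) = r b (l a x))

/-- weak*-to-weak* continuity of a map between dual spaces. -/
def WStarCont (f : Dual ℝ X → Dual ℝ Y) : Prop :=
  ∀ y : Y, Continuous fun φ : WeakDual ℝ X => f φ y

end Defs

/-- A packaged Banach `A`-bimodule (used to form iterated duals). -/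
structure ModPk (A : Type) [NormedAddCommGroup A] [NormedSpace ℝ A] : Type 1 where
  X : Type
  [grp : NormedAddCommGroup X]
  [mod : NormedSpace ℝ X]
  l : A →L[ℝ] X →L[ℝ] X
  r : A →L[ℝ] X →L[ℝ] X

attribute [instance] ModPk.grp ModPk.mod

variable {A : Type} [NormedAddCommGroup A] [NormedSpace ℝ A]

/-- The canonical dual of a packaged bimodule. -/
def ModPk.dual (P : ModPk A) : ModPk A :=
  ⟨Dual ℝ P.X, dualAct P.r, dualAct P.l⟩

/-- The `n`-th iterated dual of a packaged bimodule. -/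
def ModPk.iter (P : ModPk A) : ℕ → ModPk A
  | 0 => P
  | n+1 => (P.iter n).dual

/-- A "level": an algebra (given by its bilinear multiplication) together with a bimodule. -/
structure Lvl : Type 1 where
  Alg : Type
  [g1 : NormedAddCommGroup Alg]
  [m1 : NormedSpace ℝ Alg]
  Mod : Type
  [g2 : NormedAddCommGroup Mod]
  [m2 : NormedSpace ℝ Mod]
  mul : Alg →L[ℝ] Alg →L[ℝ] Alg
  l : Alg →L[ℝ] Mod →L[ℝ] Mod
  r : Alg →L[ℝ] Mod →L[ℝ] Mod

attribute [instance] Lvl.g1 Lvl.m1 Lvl.g2 Lvl.m2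

/-- Passing to second duals: `A^{**}` with the first Arens product, acting on `B^{**}`
via the Arens extensions `π_ℓ^{***}` and `π_r^{***}` of the module actions. -/
def Lvl.double (Q : Lvl) : Lvl where
  Alg := Dual ℝ (Dual ℝ Q.Alg)
  Mod := Dual ℝ (Dual ℝ Q.Mod)
  mul := arens Q.mul
  l := arens Q.l
  r := (arens Q.r.flip).flip

/-- Iterated even duals: `Lvl.iter Q n` is the level `(A^{(2n)}, B^{(2n)})`. -/
def Lvl.iter (Q : Lvl) : ℕ → Lvl
  | 0 => Q
  | n+1 => (Q.iter n).double

/-- The canonical embedding `A → A^{(2n)}`. -/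
def Lvl.embA (Q : Lvl) : (n : ℕ) → Q.Alg →L[ℝ] (Q.iter n).Alg
  | 0 => ContinuousLinearMap.id ℝ _
  | n+1 => (inclusionInDoubleDual ℝ ((Q.iter n).Alg)).comp (Q.embA n)

/-- The canonical embedding `B → B^{(2n)}`. -/
def Lvl.embM (Q : Lvl) : (n : ℕ) → Q.Mod →L[ℝ] (Q.iter n).Mod
  | 0 => ContinuousLinearMap.id ℝ _
  | n+1 => (inclusionInDoubleDual ℝ ((Q.iter n).Mod)).comp (Q.embM n)

/-- The left-topological-center condition `Z^ℓ_{A^{(2n+2)}}(B^{(2n+2)}) = B^{(2n+2)}`,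
stated at the double of a level `Q`: for each `b` in the second-dual module, the map
`a ↦ b·a` is weak*-to-weak* continuous. -/
def Lvl.doubleZl (Q : Lvl) : Prop :=
  ∀ b : (Q.double).Mod, WStarCont (X := Dual ℝ Q.Alg) (Y := Dual ℝ Q.Mod)
    (fun a => (Q.double).r a b)

/-- The base level of a Banach algebra `A` with a Banach `A`-bimodule `B`. -/
def lvlOf (A : Type) [NormedRing A] [NormedAlgebra ℝ A]
    (B : Type) [NormedAddCommGroup B] [NormedSpace ℝ B]
    (l r : A →L[ℝ] B →L[ℝ] B) : Lvl :=
  Lvl.mk A B (ContinuousLinearMap.mul ℝ A) l r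

/-! The second adjoint `D''` satisfies `D''(F□G) = F·D''(G) + D''(F)·G` once the iterated
evaluation `F(x ↦ D''(G)(ψ·x))` may be exchanged into `D''(G)(ψ·F)`; this fails in general,
since `ψ ∈ B**` is not weak*-continuous. Writing `ψ = η·a` with `a ∈ A` and using
`a□F = c ∈ A`, both sides become `D''(G)(η·c)`: on the relevant functionals `F` acts as
evaluation at `c`. If then `D'' = ad Φ` with `Φ ∈ B***`, restricting `Φ` to `B` gives
`D = ad (Φ|_B)`. -/

section Arens

variable {X Y Z : Type} [NormedAddCommGroup X] [NormedSpace ℝ X]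
  [NormedAddCommGroup Y] [NormedSpace ℝ Y] [NormedAddCommGroup Z] [NormedSpace ℝ Z]

lemma arens_inclusion_inclusion (m : X →L[ℝ] Y →L[ℝ] Z) (x : X) (y : Y) :
    arens m (inclusionInDoubleDual ℝ X x) (inclusionInDoubleDual ℝ Y y) =
      inclusionInDoubleDual ℝ Z (m x y) :=
  rfl

lemma arens_inclusion_apply (m : X →L[ℝ] Y →L[ℝ] Z) (x : X) (G : Dual ℝ (Dual ℝ Y))
    (φ : Dual ℝ Z) :
    arens m (inclusionInDoubleDual ℝ X x) G φ = G (adj1 m φ x) :=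
  rfl

end Arens

section RightAction

variable {B : Type} [NormedAddCommGroup B] [NormedSpace ℝ B]

lemma arens_flip_flip_assoc_inclusion (mul : A →L[ℝ] A →L[ℝ] A) (r : A →L[ℝ] B →L[ℝ] B)
    (hr : ∀ a a' b, r (mul a a') b = r a' (r a b)) (a : A) (F : Dual ℝ (Dual ℝ A))
    (η : Dual ℝ (Dual ℝ B)) :
    (arens r.flip).flip F ((arens r.flip).flip (inclusionInDoubleDual ℝ A a) η) =
      (arens r.flip).flip (arens mul (inclusionInDoubleDual ℝ A a) F) η := by
  ext f
  change η _ = η _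
  congr 1
  ext b
  change F _ = F _
  congr 1
  ext x
  exact congrArg f (hr a x b).symm

lemma apply_comp_dualAct_dualAct_flip (mul : A →L[ℝ] A →L[ℝ] A) (r : A →L[ℝ] B →L[ℝ] B)
    (hr : ∀ a a' b, r (mul a a') b = r a' (r a b)) {a c : A} {F : Dual ℝ (Dual ℝ A)}
    (hc : arens mul (inclusionInDoubleDual ℝ A a) F = inclusionInDoubleDual ℝ A c)
    (η : Dual ℝ (Dual ℝ B)) (Θ : Dual ℝ (Dual ℝ (Dual ℝ B))) :
    F (Θ.comp ((dualAct (dualAct r)).flip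
        ((arens r.flip).flip (inclusionInDoubleDual ℝ A a) η))) =
      Θ ((arens r.flip).flip F ((arens r.flip).flip (inclusionInDoubleDual ℝ A a) η)) := by
  have hκ : Θ.comp ((dualAct (dualAct r)).flip
        ((arens r.flip).flip (inclusionInDoubleDual ℝ A a) η)) =
      adj1 mul (Θ.comp ((dualAct (dualAct r)).flip η)) a := by
    ext x
    change Θ ((arens r.flip).flip (inclusionInDoubleDual ℝ A x)
        ((arens r.flip).flip (inclusionInDoubleDual ℝ A a) η)) =
      Θ ((arens r.flip).flip (inclusionInDoubleDual ℝ A (mul a x)) η)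
    rw [arens_flip_flip_assoc_inclusion mul r hr, arens_inclusion_inclusion]
  rw [hκ, ← arens_inclusion_apply, hc, arens_flip_flip_assoc_inclusion mul r hr, hc]
  rfl

lemma adj1_adj1_dualMap'_of_isDer {mul : A →L[ℝ] A →L[ℝ] A} {l r : A →L[ℝ] B →L[ℝ] B}
    {D : A →L[ℝ] Dual ℝ B} (hD : IsDer mul (dualAct r) (dualAct l) D)
    (G : Dual ℝ (Dual ℝ A)) (ψ : Dual ℝ (Dual ℝ B)) :
    adj1 (adj1 mul) G (dualMap' D ψ) =
      (bidualMap D G).comp ((dualAct (dualAct r)).flip ψ) + dualMap' D (arens l G ψ) := by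
  ext x
  change G _ = G _ + G _
  rw [← map_add]
  congr 1
  ext y
  change ψ (D (mul x y)) = ψ (dualAct r x (D y)) + ψ (dualAct l y (D x))
  rw [hD, map_add]

theorem isDer_bidualMap {mul : A →L[ℝ] A →L[ℝ] A} {l r : A →L[ℝ] B →L[ℝ] B}
    (hr : ∀ a a' b, r (mul a a') b = r a' (r a b))
    (hid : ∀ (a : A) (F : Dual ℝ (Dual ℝ A)), ∃ c : A,
      arens mul (inclusionInDoubleDual ℝ A a) F = inclusionInDoubleDual ℝ A c)
    (hsurj : ∀ ψ : Dual ℝ (Dual ℝ B), ∃ (η : Dual ℝ (Dual ℝ B)) (a : A),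
      ψ = (arens r.flip).flip (inclusionInDoubleDual ℝ A a) η)
    {D : A →L[ℝ] Dual ℝ B} (hD : IsDer mul (dualAct r) (dualAct l) D) :
    IsDer (arens mul)
      (dualAct (W := Dual ℝ (Dual ℝ A)) (X := Dual ℝ (Dual ℝ B)) (arens r.flip).flip)
      (dualAct (W := Dual ℝ (Dual ℝ A)) (X := Dual ℝ (Dual ℝ B)) (arens l)) (bidualMap D) := by
  intro F G
  ext ψ
  obtain ⟨η, a, rfl⟩ := hsurj ψ
  obtain ⟨c, hc⟩ := hid a F
  set ψ := (arens r.flip).flip (inclusionInDoubleDual ℝ A a) η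
  calc bidualMap D (arens mul F G) ψ = F (adj1 (adj1 mul) G (dualMap' D ψ)) := rfl
    _ = F ((bidualMap D G).comp ((dualAct (dualAct r)).flip ψ)) +
          F (dualMap' D (arens l G ψ)) := by
        rw [adj1_adj1_dualMap'_of_isDer hD, map_add]
    _ = bidualMap D G ((arens r.flip).flip F ψ) + bidualMap D F (arens l G ψ) := by
        rw [apply_comp_dualAct_dualAct_flip mul r hr hc]
        rfl

theorem IsInner.of_bidualMap {l r : A →L[ℝ] B →L[ℝ] B} {D : A →L[ℝ] Dual ℝ B}
    (h : IsInner (dualAct (W := Dual ℝ (Dual ℝ A)) (X := Dual ℝ (Dual ℝ B)) (arens r.flip).flip)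
      (dualAct (W := Dual ℝ (Dual ℝ A)) (X := Dual ℝ (Dual ℝ B)) (arens l)) (bidualMap D)) :
    IsInner (dualAct r) (dualAct l) D := by
  obtain ⟨Φ, hΦ⟩ := h
  refine ⟨dualMap' (inclusionInDoubleDual ℝ B) Φ, fun a => ?_⟩
  ext b
  exact congrArg (· (inclusionInDoubleDual ℝ B b)) (hΦ (inclusionInDoubleDual ℝ A a))

end RightAction

theorem stmt11_general (A : Type) [NormedRing A] [NormedAlgebra ℝ A]
    (B : Type) [NormedAddCommGroup B] [NormedSpace ℝ B]
    (l r : A →L[ℝ] B →L[ℝ] B)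
    (hbim : IsBimod (ContinuousLinearMap.mul ℝ A) l r)
    -- `A·A** ⊆ A`
    (hid : ∀ (a : A) (F : Dual ℝ (Dual ℝ A)), ∃ b : A,
      arens (ContinuousLinearMap.mul ℝ A) (inclusionInDoubleDual ℝ A a) F =
        inclusionInDoubleDual ℝ A b)
    -- `B**·A = B**`
    (hsurj : ∀ b'' : Dual ℝ (Dual ℝ B), ∃ (G : Dual ℝ (Dual ℝ B)) (a : A),
      b'' = (arens r.flip).flip (inclusionInDoubleDual ℝ A a) G)
    -- `H¹(A**, B***) = 0`
    (hcoh : ∀ D2 : Dual ℝ (Dual ℝ A) →L[ℝ] Dual ℝ (Dual ℝ (Dual ℝ B)),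
      IsDer (arens (ContinuousLinearMap.mul ℝ A))
        (dualAct (W := Dual ℝ (Dual ℝ A)) (X := Dual ℝ (Dual ℝ B)) ((arens r.flip).flip))
        (dualAct (W := Dual ℝ (Dual ℝ A)) (X := Dual ℝ (Dual ℝ B)) (arens l)) D2 →
      IsInner
        (dualAct (W := Dual ℝ (Dual ℝ A)) (X := Dual ℝ (Dual ℝ B)) ((arens r.flip).flip))
        (dualAct (W := Dual ℝ (Dual ℝ A)) (X := Dual ℝ (Dual ℝ B)) (arens l)) D2) :
    -- `H¹(A, B*) = 0`
    ∀ D : A →L[ℝ] Dual ℝ B,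
      IsDer (ContinuousLinearMap.mul ℝ A) (dualAct r) (dualAct l) D →
      IsInner (dualAct r) (dualAct l) D :=
  fun _ hD => IsInner.of_bidualMap (hcoh _ (isDer_bidualMap hbim.2.1 hid hsurj hD))

/-- **Theorem 2-16.** Let `B` be a Banach `A`-bimodule with `A·A** ⊆ A` and
`B**·A = B**`. If every continuous derivation `A** → B***` is inner, then every
continuous derivation `A → B*` is inner. -/
theorem stmt11 (A : Type) [NormedRing A] [NormedAlgebra ℝ A] [CompleteSpace A]
    (B : Type) [NormedAddCommGroup B] [NormedSpace ℝ B] [CompleteSpace B]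
    (l r : A →L[ℝ] B →L[ℝ] B)
    (hbim : IsBimod (ContinuousLinearMap.mul ℝ A) l r)
    -- `A·A** ⊆ A`
    (hid : ∀ (a : A) (F : Dual ℝ (Dual ℝ A)), ∃ b : A,
      arens (ContinuousLinearMap.mul ℝ A) (inclusionInDoubleDual ℝ A a) F =
        inclusionInDoubleDual ℝ A b)
    -- `B**·A = B**`
    (hsurj : ∀ b'' : Dual ℝ (Dual ℝ B), ∃ (G : Dual ℝ (Dual ℝ B)) (a : A),
      b'' = (arens r.flip).flip (inclusionInDoubleDual ℝ A a) G)
    -- `H¹(A**, B***) = 0`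
    (hcoh : ∀ D2 : Dual ℝ (Dual ℝ A) →L[ℝ] Dual ℝ (Dual ℝ (Dual ℝ B)),
      IsDer (arens (ContinuousLinearMap.mul ℝ A))
        (dualAct (W := Dual ℝ (Dual ℝ A)) (X := Dual ℝ (Dual ℝ B)) ((arens r.flip).flip))
        (dualAct (W := Dual ℝ (Dual ℝ A)) (X := Dual ℝ (Dual ℝ B)) (arens l)) D2 →
      IsInner
        (dualAct (W := Dual ℝ (Dual ℝ A)) (X := Dual ℝ (Dual ℝ B)) ((arens r.flip).flip))
        (dualAct (W := Dual ℝ (Dual ℝ A)) (X := Dual ℝ (Dual ℝ B)) (arens l)) D2) :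
    -- `H¹(A, B*) = 0`
    ∀ D : A →L[ℝ] Dual ℝ B,
      IsDer (ContinuousLinearMap.mul ℝ A) (dualAct r) (dualAct l) D →
      IsInner (dualAct r) (dualAct l) D :=
  stmt11_general A B l r hbim hid hsurj hcoh
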